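/- The Maurer–Cartan initial value problem implies the fixed-point equation: suppose τ : {1,2,...} → g¹ satisfies the Maurer–Cartan equation degreewise, τ₁ = x where h₁x = 0 and ∇₁π₁x = x, and for every b ≥ 2 one has h₁τ_b = 0 and π₁τ_b = 0. Then τ_b = −(1/2) h₂([τ,τ]_b) for every b ≥ 2; equivalently, the Kuranishi map recovers the initial value: τ_b + (1/2) h₂([τ,τ]_b) equals x for b = 1 and 0 for b ≥ 2. -/
import Mathlib


/-- Extension of a sequence indexed by {1,2,3,...} to ℕ by zero. -/
def ext {V : Type*} [AddCommGroup V] (a : ℕ+ → V) : ℕ → V :=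
  fun n => if h : 0 < n then a ⟨n, h⟩ else 0

/-- The convolution [τ,τ´]_b = Σ_{i+j=b, i,j≥1} [τ_i, τ´_j] of two sequences
with respect to a bilinear bracket (terms with index 0 vanish). -/
def bconv {K V W : Type*} [Field K] [AddCommGroup V] [Module K V]
    [AddCommGroup W] [Module K W]
    (Q : V →ₗ[K] V →ₗ[K] W) (a b : ℕ+ → V) (n : ℕ+) : W :=
  ∑ i ∈ Finset.range ((n : ℕ) + 1), Q (ext a i) (ext b ((n : ℕ) - i))

/-- The Maurer–Cartan initial value problem implies the
fixed-point equation: if τ satisfies MC degreewise, τ₁ = x with h₁x = 0 and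
∇₁π₁x = x, and h₁τ_b = 0, π₁τ_b = 0 for b ≥ 2, then τ_b = −(1/2)h₂([τ,τ]_b)
for b ≥ 2; equivalently the Kuranishi map recovers the initial value:
τ_b + (1/2)h₂([τ,τ]_b) = x for b = 1 and = 0 for b ≥ 2. -/
theorem stmt13 (K : Type*) [Field K] [CharZero K]
    (g0 g1 g2 g3 H1 H2 : Type*)
    [AddCommGroup g0] [Module K g0] [AddCommGroup g1] [Module K g1]
    [AddCommGroup g2] [Module K g2] [AddCommGroup g3] [Module K g3]
    [AddCommGroup H1] [Module K H1] [AddCommGroup H2] [Module K H2]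
    (d0 : g0 →ₗ[K] g1) (d1 : g1 →ₗ[K] g2) (d2 : g2 →ₗ[K] g3)
    (h1 : g1 →ₗ[K] g0) (h2 : g2 →ₗ[K] g1) (h3 : g3 →ₗ[K] g2)
    (π1 : g1 →ₗ[K] H1) (n1 : H1 →ₗ[K] g1)
    (π2 : g2 →ₗ[K] H2) (n2 : H2 →ₗ[K] g2)
    (hdd1 : d1.comp d0 = 0) (hdd2 : d2.comp d1 = 0)
    (hSDR1 : d0.comp h1 + h2.comp d1 = LinearMap.id - n1.comp π1)
    (hSDR2 : d1.comp h2 + h3.comp d2 = LinearMap.id - n2.comp π2)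
    (hside1 : h1.comp h2 = 0) (hside2 : π1.comp h2 = 0)
    (hside3 : h1.comp n1 = 0) (hretr : π1.comp n1 = LinearMap.id)
    (hdn : d1.comp n1 = 0) (hπd : π2.comp d1 = 0)
    (br : g1 →ₗ[K] g1 →ₗ[K] g2) (hbrsymm : ∀ x y : g1, br x y = br y x)
    (β : g2 →ₗ[K] g1 →ₗ[K] g3)
    (hLeibniz : ∀ x y : g1, d2 (br x y) = β (d1 x) y + β (d1 y) x)
    (hJacobi : ∀ x y z : g1, β (br x y) z + β (br y z) x + β (br z x) y = 0)
    (x : g1) (τ : ℕ+ → g1)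
    (hMC : ∀ b : ℕ+, d1 (τ b) + (2 : K)⁻¹ • bconv br τ τ b = 0)
    (hτ1 : τ 1 = x) (hx1 : h1 x = 0) (hx2 : n1 (π1 x) = x)
    (hhigher : ∀ b : ℕ+, 2 ≤ b → h1 (τ b) = 0 ∧ π1 (τ b) = 0) :
    (∀ b : ℕ+, 2 ≤ b → τ b = -((2 : K)⁻¹ • h2 (bconv br τ τ b))) ∧
    (∀ b : ℕ+, τ b + (2 : K)⁻¹ • h2 (bconv br τ τ b)
      = if b = 1 then x else 0) := by
  have key : ∀ b : ℕ+, 2 ≤ b → τ b = -((2 : K)⁻¹ • h2 (bconv br τ τ b)) := by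
    intro b hb
    obtain ⟨hh, hp⟩ := hhigher b hb
    have hs := congrArg (fun f : g1 →ₗ[K] g1 => f (τ b)) hSDR1
    simp only [LinearMap.add_apply, LinearMap.comp_apply, LinearMap.id_apply,
      LinearMap.sub_apply, hh, hp, map_zero, zero_add, sub_zero] at hs
    have hd : d1 (τ b) = -((2 : K)⁻¹ • bconv br τ τ b) :=
      eq_neg_of_add_eq_zero_left (hMC b)
    rw [hd, map_neg, map_smul] at hs
    exact hs.symm
  refine ⟨key, fun b => ?_⟩
  by_cases hb1 : b = 1
  · subst hb1
    have hc : bconv br τ τ 1 = 0 := by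
      unfold bconv
      simp [Finset.sum_range_succ, ext]
    simp [hc, hτ1]
  · have hb : 2 ≤ b := by
      rcases lt_or_ge b 2 with h | h
      · exact absurd (PNat.lt_add_one_iff.mp h |>.antisymm b.one_le) hb1
      · exact h
    rw [if_neg hb1, key b hb]
    abel
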